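/- arXiv:1403.2481 — 6 statements merged into one kernel-verified Lean document; each statement's English description precedes it below -/
import Mathlib

section
/- Let $H$ be a cocommutative Hopf algebra over a field $F$, and let $M, N$ be $H$-modules. If $V$ is a finite-dimensional $H$-submodule of $M \otimes N$, then there exist finite-dimensional $H$-submodules $M_V \subseteq M$ and $N_V \subseteq N$ such that $V \subseteq M_V \otimes N_V$ inside $M \otimes N$. -/
/-!
`M_V` is spanned by the contractions `(id ⊗ f) v` with `v ∈ V` and `f ∈ N^*`. An element of
`M ⊗ N` all of whose contractions lie in a subspace `P ⊆ M` lies in `P ⊗ N` (right exactness of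
`- ⊗ N` on `P → M → M ⧸ P`); together with the symmetric statement and the extension of functionals
from a subspace this gives `V ⊆ M_V ⊗ N_V`, and `M_V ⊆ P` for any finite-dimensional `P` with
`V ⊆ P ⊗ N`. For `H`-stability, cocommutativity gives `h ⊗ 1 = ∑ (1 ⊗ S h₍₂₎) Δ(h₍₁₎)` in `H ⊗ H`,
so `h • (id ⊗ f) v = ∑ (id ⊗ f ∘ S h₍₂₎) (h₍₁₎ • v)` is again a sum of contractions of elements
of `V`; on the other side `1 ⊗ h = ∑ (S h₍₁₎ ⊗ 1) Δ(h₍₂₎)` holds in every Hopf algebra.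
-/

open TensorProduct

variable (F : Type*) [Field F] (H : Type*) [Ring H] [HopfAlgebra F H]
  (M N : Type*) [AddCommGroup M] [Module F M] [Module H M]
  [IsScalarTower F H M] [SMulCommClass H F M]
  [AddCommGroup N] [Module F N] [Module H N]
  [IsScalarTower F H N] [SMulCommClass H F N]

/-- The action of `h ∈ H` on `M ⊗[F] N` via the comultiplication of `H`:
`h • (m ⊗ n) = ∑ h⁽¹⁾ m ⊗ h⁽²⁾ n`. -/
noncomputable def hopfTensorAction : H →ₗ[F] (M ⊗[F] N) →ₗ[F] M ⊗[F] N :=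
  (TensorProduct.homTensorHomMap (RingHom.id F) M N M N).comp
    ((TensorProduct.map (Algebra.lsmul F F M).toLinearMap
        (Algebra.lsmul F F N).toLinearMap).comp Coalgebra.comul)

namespace TensorProduct

section Contraction

variable {R M N P : Type*} [CommSemiring R] [AddCommMonoid M] [Module R M]
  [AddCommMonoid N] [Module R N] [AddCommMonoid P] [Module R P]

noncomputable def contractRight (f : Module.Dual R N) : M ⊗[R] N →ₗ[R] M :=
  TensorProduct.rid R M ∘ₗ f.lTensor M

noncomputable def contractLeft (f : Module.Dual R M) : M ⊗[R] N →ₗ[R] N :=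
  TensorProduct.lid R N ∘ₗ f.rTensor N

@[simp]
lemma contractRight_tmul (f : Module.Dual R N) (m : M) (n : N) :
    contractRight f (m ⊗ₜ n) = f n • m := by
  simp [contractRight]

@[simp]
lemma contractLeft_tmul (f : Module.Dual R M) (m : M) (n : N) :
    contractLeft f (m ⊗ₜ n) = f m • n := by
  simp [contractLeft]

lemma contractLeft_comm (f : Module.Dual R M) (x : N ⊗[R] M) :
    contractLeft f (TensorProduct.comm R N M x) = contractRight f x := by
  induction x using TensorProduct.induction_on <;> simp_all

lemma contractRight_comp_lTensor (f : Module.Dual R N) (g : P →ₗ[R] N) :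
    contractRight f ∘ₗ g.lTensor M = contractRight (f ∘ₗ g) :=
  TensorProduct.ext' fun _ _ ↦ by simp

lemma contractLeft_comp_rTensor (f : Module.Dual R M) (g : P →ₗ[R] M) :
    contractLeft f ∘ₗ g.rTensor N = contractLeft (f ∘ₗ g) :=
  TensorProduct.ext' fun _ _ ↦ by simp

lemma contractRight_comp_rTensor (f : Module.Dual R N) (g : M →ₗ[R] P) :
    contractRight f ∘ₗ g.rTensor N = g ∘ₗ contractRight f :=
  TensorProduct.ext' fun _ _ ↦ by simp

lemma contractLeft_comp_lTensor (f : Module.Dual R M) (g : N →ₗ[R] P) :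
    contractLeft f ∘ₗ g.lTensor M = g ∘ₗ contractLeft f :=
  TensorProduct.ext' fun _ _ ↦ by simp

lemma eq_zero_of_forall_contractRight_eq_zero [Module.Free R N] {x : M ⊗[R] N}
    (hx : ∀ f : Module.Dual R N, contractRight f x = 0) : x = 0 := by
  classical
  let b := Module.Free.chooseBasis R N
  refine (equivFinsuppOfBasisRight b).injective ?_
  ext i
  have hcoord : (Finsupp.lapply i).comp (equivFinsuppOfBasisRight b).toLinearMap =
      contractRight (M := M) (b.coord i) :=
    TensorProduct.ext' fun m n ↦ by simp
  simpa using (LinearMap.congr_fun hcoord x).trans (hx _)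

end Contraction

section Exactness

variable {R M N : Type*} [CommRing R] [AddCommGroup M] [Module R M]
  [AddCommGroup N] [Module R N]

lemma mem_range_rTensor_subtype_of_forall_contractRight_mem [Module.Free R N] (P : Submodule R M)
    {x : M ⊗[R] N} (hx : ∀ f : Module.Dual R N, contractRight f x ∈ P) :
    x ∈ LinearMap.range (P.subtype.rTensor N) := by
  rw [← (rTensor_exact N (LinearMap.exact_subtype_mkQ P) P.mkQ_surjective).linearMap_ker_eq]
  refine eq_zero_of_forall_contractRight_eq_zero fun f ↦ ?_
  rw [← LinearMap.comp_apply, contractRight_comp_rTensor, LinearMap.comp_apply,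
    Submodule.mkQ_apply, Submodule.Quotient.mk_eq_zero]
  exact hx f

lemma mem_range_lTensor_subtype_of_forall_contractLeft_mem [Module.Free R M] (Q : Submodule R N)
    {x : M ⊗[R] N} (hx : ∀ f : Module.Dual R M, contractLeft f x ∈ Q) :
    x ∈ LinearMap.range (Q.subtype.lTensor M) := by
  obtain ⟨y, hy⟩ := mem_range_rTensor_subtype_of_forall_contractRight_mem Q
    (x := TensorProduct.comm R M N x) fun f ↦ by simpa [← contractLeft_comm] using hx f
  refine ⟨TensorProduct.comm R Q M y, ?_⟩
  rw [← LinearMap.comm_comp_rTensor_comp_comm_eq, LinearMap.comp_apply, LinearMap.comp_apply]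
  simp [hy]

end Exactness

lemma mem_range_mapIncl_of_forall_contract_mem {K M N : Type*} [Field K]
    [AddCommGroup M] [Module K M] [AddCommGroup N] [Module K N]
    (P : Submodule K M) (Q : Submodule K N) {x : M ⊗[K] N}
    (hP : ∀ f : Module.Dual K N, contractRight f x ∈ P)
    (hQ : ∀ g : Module.Dual K M, contractLeft g x ∈ Q) :
    x ∈ LinearMap.range (mapIncl P Q) := by
  obtain ⟨y, rfl⟩ := mem_range_rTensor_subtype_of_forall_contractRight_mem P hP
  obtain ⟨z, rfl⟩ := mem_range_lTensor_subtype_of_forall_contractLeft_mem Q (x := y) fun g ↦ by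
    obtain ⟨g', rfl⟩ := LinearMap.exists_extend g
    rw [← contractLeft_comp_rTensor]
    exact hQ g'
  exact ⟨z, (LinearMap.congr_fun
    (LinearMap.rTensor_comp_lTensor (f := P.subtype) (g := Q.subtype)) z).symm⟩

section Support

variable {R M N : Type*} [CommSemiring R] [AddCommMonoid M] [Module R M]
  [AddCommMonoid N] [Module R N]

/-- The paper's `M_V`, the image of `V ⊗ N^* → M`. -/
noncomputable def leftSupport (V : Submodule R (M ⊗[R] N)) : Submodule R M :=
  ⨆ f : Module.Dual R N, V.map (contractRight f)

/-- The paper's `N_V`, the image of `M^* ⊗ V → N`. -/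
noncomputable def rightSupport (V : Submodule R (M ⊗[R] N)) : Submodule R N :=
  ⨆ f : Module.Dual R M, V.map (contractLeft f)

lemma leftSupport_le_iff {V : Submodule R (M ⊗[R] N)} {P : Submodule R M} :
    leftSupport V ≤ P ↔ ∀ f : Module.Dual R N, ∀ v ∈ V, contractRight f v ∈ P := by
  simp_rw [leftSupport, iSup_le_iff, Submodule.map_le_iff_le_comap]
  rfl

lemma rightSupport_le_iff {V : Submodule R (M ⊗[R] N)} {Q : Submodule R N} :
    rightSupport V ≤ Q ↔ ∀ f : Module.Dual R M, ∀ v ∈ V, contractLeft f v ∈ Q := by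
  simp_rw [rightSupport, iSup_le_iff, Submodule.map_le_iff_le_comap]
  rfl

lemma contractRight_mem_leftSupport {V : Submodule R (M ⊗[R] N)} (f : Module.Dual R N)
    {v : M ⊗[R] N} (hv : v ∈ V) : contractRight f v ∈ leftSupport V :=
  leftSupport_le_iff.mp le_rfl f v hv

lemma contractLeft_mem_rightSupport {V : Submodule R (M ⊗[R] N)} (f : Module.Dual R M)
    {v : M ⊗[R] N} (hv : v ∈ V) : contractLeft f v ∈ rightSupport V :=
  rightSupport_le_iff.mp le_rfl f v hv

lemma leftSupport_le_of_le_range_rTensor {V : Submodule R (M ⊗[R] N)} {P : Submodule R M}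
    (hV : V ≤ LinearMap.range (P.subtype.rTensor N)) : leftSupport V ≤ P := by
  refine leftSupport_le_iff.mpr fun f v hv ↦ ?_
  obtain ⟨y, rfl⟩ := hV hv
  rw [← LinearMap.comp_apply, contractRight_comp_rTensor]
  exact (contractRight f y).2

lemma rightSupport_le_of_le_range_lTensor {V : Submodule R (M ⊗[R] N)} {Q : Submodule R N}
    (hV : V ≤ LinearMap.range (Q.subtype.lTensor M)) : rightSupport V ≤ Q := by
  refine rightSupport_le_iff.mpr fun f v hv ↦ ?_
  obtain ⟨y, rfl⟩ := hV hv
  rw [← LinearMap.comp_apply, contractLeft_comp_lTensor]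
  exact (contractLeft f y).2

end Support

section FiniteDimensional

variable {K M N : Type*} [Field K] [AddCommGroup M] [Module K M] [AddCommGroup N] [Module K N]
  (V : Submodule K (M ⊗[K] N))

lemma le_range_mapIncl_leftSupport_rightSupport :
    V ≤ LinearMap.range (mapIncl (leftSupport V) (rightSupport V)) := fun _ hv ↦
  mem_range_mapIncl_of_forall_contract_mem _ _ (contractRight_mem_leftSupport · hv)
    (contractLeft_mem_rightSupport · hv)

instance finiteDimensional_leftSupport [FiniteDimensional K V] :
    FiniteDimensional K (leftSupport V) := by
  obtain ⟨s, hs, rfl⟩ := V.fg_def.mp Submodule.FG.of_finite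
  obtain ⟨P, hP, hsP⟩ := exists_finite_submodule_left_of_setFinite s hs
  exact Submodule.finiteDimensional_of_le
    (leftSupport_le_of_le_range_rTensor (Submodule.span_le.mpr hsP))

instance finiteDimensional_rightSupport [FiniteDimensional K V] :
    FiniteDimensional K (rightSupport V) := by
  obtain ⟨s, hs, rfl⟩ := V.fg_def.mp Submodule.FG.of_finite
  obtain ⟨Q, hQ, hsQ⟩ := exists_finite_submodule_right_of_setFinite s hs
  exact Submodule.finiteDimensional_of_le
    (rightSupport_le_of_le_range_lTensor (Submodule.span_le.mpr hsQ))

end FiniteDimensional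

end TensorProduct

namespace HopfAlgebra

open Coalgebra

variable {R A ι : Type*} [CommSemiring R] [Semiring A] [HopfAlgebra R A]

lemma sum_antipode_tmul_one_mul_comul {a : A} (repr : Repr R a ι) :
    ∑ i ∈ repr.index, (antipode R (repr.left i) ⊗ₜ[R] (1 : A)) * comul (repr.right i) =
      1 ⊗ₜ a := by
  set μS := LinearMap.mul' R A ∘ₗ (antipode R).rTensor A
  have hmul : ∀ (x : A) (w : A ⊗[R] A),
      (antipode R x ⊗ₜ[R] (1 : A)) * w =
        μS.rTensor A ((TensorProduct.assoc R A A A).symm (x ⊗ₜ w)) := by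
    intro x w
    induction w using TensorProduct.induction_on <;> simp_all [μS, mul_add, tmul_add]
  calc _ = μS.rTensor A
          ((TensorProduct.assoc R A A A).symm ((comul (R := R)).lTensor A (comul a))) := by
        simp [hmul, ← repr.eq, map_sum]
    _ = μS.rTensor A ((comul (R := R)).rTensor A (comul a)) := by rw [coassoc_symm_apply]
    _ = (Algebra.linearMap R A ∘ₗ counit).rTensor A (comul a) := by
        rw [← LinearMap.rTensor_comp_apply, LinearMap.comp_assoc, mul_antipode_rTensor_comul]
    _ = 1 ⊗ₜ a := by simp [LinearMap.rTensor_comp_apply, rTensor_counit_comul]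

lemma sum_one_tmul_antipode_mul_comul [IsCocomm R A] {a : A} (repr : Repr R a ι) :
    ∑ i ∈ repr.index, ((1 : A) ⊗ₜ[R] antipode R (repr.right i)) * comul (repr.left i) =
      a ⊗ₜ 1 := by
  let swapped : Repr R a ι :=
    { index := repr.index, left := repr.right, right := repr.left
      eq := by rw [← comm_comul R a, ← repr.eq, map_sum]; rfl }
  have hcomm (x : A) : Algebra.TensorProduct.comm R A A (comul x) = comul x := comm_comul R x
  simpa [map_sum, hcomm] using
    congr(Algebra.TensorProduct.comm R A A $(sum_antipode_tmul_one_mul_comul swapped))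

end HopfAlgebra

section HopfModule

open Coalgebra HopfAlgebra

noncomputable def tensorPairAction : H ⊗[F] H →ₐ[F] Module.End F (M ⊗[F] N) :=
  Module.endTensorEndAlgHom.comp
    (Algebra.TensorProduct.map (Algebra.lsmul F F M) (Algebra.lsmul F F N))

lemma tensorPairAction_tmul (a b : H) :
    tensorPairAction F H M N (a ⊗ₜ b) = map (Algebra.lsmul F F M a) (Algebra.lsmul F F N b) :=
  rfl

lemma tensorPairAction_comul (h : H) :
    tensorPairAction F H M N (comul h) = hopfTensorAction F H M N h := by
  have : (tensorPairAction F H M N).toLinearMap =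
      homTensorHomMap (RingHom.id F) M N M N ∘ₗ
        map (Algebra.lsmul F F M).toLinearMap (Algebra.lsmul F F N).toLinearMap :=
    TensorProduct.ext' fun _ _ ↦ rfl
  exact LinearMap.congr_fun this (comul h)

lemma tensorPairAction_tmul_one (a : H) :
    tensorPairAction F H M N (a ⊗ₜ 1) = (Algebra.lsmul F F M a).rTensor N := by
  rw [tensorPairAction_tmul, map_one]
  rfl

lemma tensorPairAction_one_tmul (b : H) :
    tensorPairAction F H M N (1 ⊗ₜ b) = (Algebra.lsmul F F N b).lTensor M := by
  rw [tensorPairAction_tmul, map_one]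
  rfl

variable {F H M N}

lemma smul_mem_leftSupport [IsCocomm F H] {V : Submodule F (M ⊗[F] N)}
    (hV : ∀ h : H, ∀ v ∈ V, hopfTensorAction F H M N h v ∈ V) (h : H) {m : M}
    (hm : m ∈ leftSupport V) : h • m ∈ leftSupport V := by
  suffices leftSupport V ≤ (leftSupport V).comap (Algebra.lsmul F F M h) from this hm
  refine leftSupport_le_iff.mpr fun f v hv ↦ ?_
  let repr := Repr.arbitrary F h
  have hexpand : Algebra.lsmul F F M h (contractRight f v) = ∑ i ∈ repr.index,
      contractRight (f ∘ₗ Algebra.lsmul F F N (antipode F (repr.right i)))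
        (hopfTensorAction F H M N (repr.left i) v) := by
    rw [← LinearMap.comp_apply, ← contractRight_comp_rTensor, LinearMap.comp_apply,
      ← tensorPairAction_tmul_one, ← sum_one_tmul_antipode_mul_comul repr, map_sum,
      LinearMap.sum_apply, map_sum]
    refine Finset.sum_congr rfl fun i _ ↦ ?_
    rw [map_mul, Module.End.mul_apply, tensorPairAction_comul, tensorPairAction_one_tmul,
      ← LinearMap.comp_apply, contractRight_comp_lTensor]
  rw [Submodule.mem_comap, hexpand]
  exact Submodule.sum_mem _ fun i _ ↦ contractRight_mem_leftSupport _ (hV _ _ hv)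

lemma smul_mem_rightSupport {V : Submodule F (M ⊗[F] N)}
    (hV : ∀ h : H, ∀ v ∈ V, hopfTensorAction F H M N h v ∈ V) (h : H) {n : N}
    (hn : n ∈ rightSupport V) : h • n ∈ rightSupport V := by
  suffices rightSupport V ≤ (rightSupport V).comap (Algebra.lsmul F F N h) from this hn
  refine rightSupport_le_iff.mpr fun f v hv ↦ ?_
  let repr := Repr.arbitrary F h
  have hexpand : Algebra.lsmul F F N h (contractLeft f v) = ∑ i ∈ repr.index,
      contractLeft (f ∘ₗ Algebra.lsmul F F M (antipode F (repr.left i)))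
        (hopfTensorAction F H M N (repr.right i) v) := by
    rw [← LinearMap.comp_apply, ← contractLeft_comp_lTensor, LinearMap.comp_apply,
      ← tensorPairAction_one_tmul, ← sum_antipode_tmul_one_mul_comul repr, map_sum,
      LinearMap.sum_apply, map_sum]
    refine Finset.sum_congr rfl fun i _ ↦ ?_
    rw [map_mul, Module.End.mul_apply, tensorPairAction_comul, tensorPairAction_tmul_one,
      ← LinearMap.comp_apply, contractLeft_comp_rTensor]
  rw [Submodule.mem_comap, hexpand]
  exact Submodule.sum_mem _ fun i _ ↦ contractLeft_mem_rightSupport _ (hV _ _ hv)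

end HopfModule

/-- Over a cocommutative Hopf algebra `H`, any finite-dimensional `H`-submodule `V` of
`M ⊗ N` (a subspace invariant under the comultiplication action) is contained in
`M_V ⊗ N_V` for some finite-dimensional `H`-submodules `M_V ⊆ M`, `N_V ⊆ N`. -/
theorem finiteDimensional_submodule_of_tensor_le
    (hcocomm : (TensorProduct.comm F H H).toLinearMap.comp Coalgebra.comul
        = (Coalgebra.comul : H →ₗ[F] H ⊗[F] H))
    (V : Submodule F (M ⊗[F] N)) [FiniteDimensional F V]
    (hV : ∀ h : H, ∀ v ∈ V, hopfTensorAction F H M N h v ∈ V) :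
    ∃ (MV : Submodule H M) (NV : Submodule H N),
      FiniteDimensional F (MV.restrictScalars F) ∧
      FiniteDimensional F (NV.restrictScalars F) ∧
      V ≤ LinearMap.range
        (TensorProduct.mapIncl (MV.restrictScalars F) (NV.restrictScalars F)) := by
  have : Coalgebra.IsCocomm F H := ⟨hcocomm⟩
  exact ⟨{ leftSupport V with smul_mem' := smul_mem_leftSupport hV },
    { rightSupport V with smul_mem' := smul_mem_rightSupport hV },
    finiteDimensional_leftSupport V, finiteDimensional_rightSupport V,
    le_range_mapIncl_leftSupport_rightSupport V⟩
end

section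
/- Let $\mathfrak{G}$ be a Lie algebra over a field $F$, $I \subseteq \mathfrak{G}$ an ideal, $U$ a simple $\mathfrak{G}/I$-module (regarded as a $\mathfrak{G}$-module annihilated by $I$), and $W$ a $\mathfrak{G}$-module that is simple as an $I$-module, on which $I$ acts densely (i.e., for every $w \in W$ and $g \in \mathfrak{G}$ there exists $k \in I$ with $kw = gw$), and such that $\mathrm{End}_I(W) = F$ (every $I$-module endomorphism of $W$ is scalar). Then $U \otimes W$ is a simple $\mathfrak{G}$-module. -/
/-!
Let `M ≠ 0` be a Lie submodule of `U ⊗ W`. As `I` kills `U`, each `x ∈ I` acts on `U ⊗ W` as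
`1 ⊗ x`. Fix a basis `(bᵢ)` of `U`, write elements of `M` as `∑ bᵢ ⊗ wᵢ`, and pick a nonzero
`m ∈ M` of minimal support `S` and some `i₀ ∈ S`. By minimality an element of `M` supported in `S`
is determined by its `i₀`-th coordinate, and by simplicity of `W` over `I` every vector of `W` is
such a coordinate. Hence `wᵢ₀ ↦ wᵢ` is a well-defined `I`-endomorphism of `W`, i.e. a scalar `cᵢ`,
and `m = u ⊗ wᵢ₀` with `u = ∑ cᵢ bᵢ`. Simplicity of `W` over `I` again gives `u ⊗ W ⊆ M`, and
`{u | u ⊗ W ⊆ M}` is a nonzero Lie submodule of the simple module `U`, so `M = U ⊗ W`.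
-/

open TensorProduct

namespace Finsupp

theorem mapRange_linearMap_mem_supported {R M M' ι : Type*} [Semiring R] [AddCommMonoid M]
    [Module R M] [AddCommMonoid M'] [Module R M'] {s : Set ι} (a : M →ₗ[R] M') {g : ι →₀ M}
    (hg : g ∈ supported M R s) : mapRange.linearMap a g ∈ supported M' R s :=
  (mem_supported R _).2 <|
    (Finset.coe_subset.2 (support_mapRange (hf := map_zero a))).trans ((mem_supported R g).1 hg)

variable {F W ι G : Type*} [Field F] [AddCommGroup W] [Module F W]
  {ρ : G → Module.End F W} {N : Submodule F (ι →₀ W)} {f : ι →₀ W} {i₀ : ι}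

theorem injective_lapply_domRestrict_of_minimal
    (hmin : ∀ g ∈ N, g.support ⊂ f.support → g = 0) (hi₀ : i₀ ∈ f.support) :
    Function.Injective ((lapply i₀).domRestrict (N ⊓ supported W F ↑f.support)) := by
  rw [← LinearMap.ker_eq_bot, LinearMap.ker_eq_bot']
  rintro ⟨g, hgN, hgf⟩ (hg : g i₀ = 0)
  refine Subtype.ext (hmin g hgN ((Finset.ssubset_iff_of_subset ?_).2 ⟨i₀, hi₀, ?_⟩))
  · exact (mem_supported F g).1 hgf
  · simpa using hg

theorem surjective_lapply_domRestrict_of_minimal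
    (hsimple : ∀ p : Submodule F W, (∀ x, ∀ w ∈ p, ρ x w ∈ p) → p = ⊥ ∨ p = ⊤)
    (hN : ∀ x, ∀ g ∈ N, mapRange.linearMap (ρ x) g ∈ N) (hfN : f ∈ N) (hi₀ : i₀ ∈ f.support) :
    Function.Surjective ((lapply i₀).domRestrict (N ⊓ supported W F ↑f.support)) := by
  rw [← LinearMap.range_eq_top]
  refine (hsimple _ ?_).resolve_left fun h => mem_support_iff.1 hi₀ ?_
  · rintro x _ ⟨⟨g, hgN, hgf⟩, rfl⟩
    refine ⟨⟨mapRange.linearMap (ρ x) g, hN x g hgN, ?_⟩, rfl⟩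
    exact mapRange_linearMap_mem_supported (ρ x) hgf
  · rw [← Submodule.mem_bot F, ← h]
    exact ⟨⟨f, hfN, mem_supported_support F f⟩, rfl⟩

theorem exists_eq_smul_of_minimal
    (hsimple : ∀ p : Submodule F W, (∀ x, ∀ w ∈ p, ρ x w ∈ p) → p = ⊥ ∨ p = ⊤)
    (hschur : ∀ g : Module.End F W, (∀ x w, g (ρ x w) = ρ x (g w)) →
      ∃ c : F, g = c • LinearMap.id)
    (hN : ∀ x, ∀ g ∈ N, mapRange.linearMap (ρ x) g ∈ N) (hfN : f ∈ N)
    (hmin : ∀ g ∈ N, g.support ⊂ f.support → g = 0) (hi₀ : i₀ ∈ f.support) (i : ι) :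
    ∃ c : F, f i = c • f i₀ := by
  set P := N ⊓ supported W F ↑f.support
  let e : P ≃ₗ[F] W := .ofBijective ((lapply i₀).domRestrict P)
    ⟨injective_lapply_domRestrict_of_minimal hmin hi₀,
      surjective_lapply_domRestrict_of_minimal hsimple hN hfN hi₀⟩
  let g : Module.End F W := (lapply i).domRestrict P ∘ₗ e.symm.toLinearMap
  have hg : ∀ n : P, g (n.1 i₀) = n.1 i := fun n => by
    have hn : e.symm (n.1 i₀) = n := e.symm_apply_eq.2 rfl
    simp [g, hn]
  obtain ⟨c, hc⟩ := hschur g fun x w => by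
    obtain ⟨⟨n, hnN, hnf⟩, rfl⟩ := e.surjective w
    let n' : P := ⟨mapRange.linearMap (ρ x) n, hN x n hnN,
      mapRange_linearMap_mem_supported (ρ x) hnf⟩
    have he : e ⟨n, hnN, hnf⟩ = n i₀ := rfl
    rw [he, hg ⟨n, hnN, hnf⟩]
    simpa [n'] using hg n'
  exact ⟨c, by simpa [hc] using (hg ⟨f, hfN, mem_supported_support F f⟩).symm⟩

theorem exists_mapRange_smul_mem
    (hsimple : ∀ p : Submodule F W, (∀ x, ∀ w ∈ p, ρ x w ∈ p) → p = ⊥ ∨ p = ⊤)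
    (hschur : ∀ g : Module.End F W, (∀ x w, g (ρ x w) = ρ x (g w)) →
      ∃ c : F, g = c • LinearMap.id)
    (hN : ∀ x, ∀ g ∈ N, mapRange.linearMap (ρ x) g ∈ N) (hN0 : N ≠ ⊥) :
    ∃ c : ι →₀ F, c ≠ 0 ∧ ∃ w ≠ 0, c.mapRange (· • w) (zero_smul F w) ∈ N := by
  obtain ⟨f, ⟨hfN, hf0⟩, hmin⟩ := (InvImage.wf support wellFounded_lt).has_min
    {g | g ∈ N ∧ g ≠ 0} ((Submodule.ne_bot_iff N).1 hN0)
  obtain ⟨i₀, hi₀⟩ := support_nonempty_iff.2 hf0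
  have hw : f i₀ ≠ 0 := mem_support_iff.1 hi₀
  choose c hc using exists_eq_smul_of_minimal hsimple hschur hN hfN
    (fun g hgN hlt => by_contra fun hg0 => hmin g ⟨hgN, hg0⟩ hlt) hi₀
  have hfin : (Function.support c).Finite := f.support.finite_toSet.subset fun i hi => by
    rw [Finset.mem_coe, mem_support_iff, hc i]
    exact smul_ne_zero hi hw
  refine ⟨ofSupportFinite c hfin, fun h => hf0 ?_, f i₀, hw, ?_⟩
  · ext i
    have hci : c i = 0 := by simpa [ofSupportFinite_coe] using congr($h i)
    rw [hc i, hci, zero_smul, coe_zero, Pi.zero_apply]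
  · convert hfN
    ext i
    rw [mapRange_apply, ofSupportFinite_coe, hc i]

end Finsupp

theorem TensorProduct.equivFinsuppOfBasisLeft_lTensor {R M N P ι : Type*} [CommSemiring R]
    [AddCommMonoid M] [Module R M] [AddCommMonoid N] [Module R N] [AddCommMonoid P] [Module R P]
    [DecidableEq ι] (b : Module.Basis ι R M) (a : N →ₗ[R] P) (m : M ⊗[R] N) :
    equivFinsuppOfBasisLeft b (a.lTensor M m) =
      Finsupp.mapRange.linearMap a (equivFinsuppOfBasisLeft b m) := by
  induction m with
  | zero => simp
  | tmul u w => ext i; simp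
  | add m m' hm hm' => simp only [map_add, hm, hm']

section Tensor

variable {F U W G : Type*} [Field F] [AddCommGroup U] [Module F U] [AddCommGroup W] [Module F W]
  {ρ : G → Module.End F W} {N : Submodule F (U ⊗[F] W)}

theorem forall_tmul_mem_of_tmul_mem
    (hsimple : ∀ p : Submodule F W, (∀ x, ∀ w ∈ p, ρ x w ∈ p) → p = ⊥ ∨ p = ⊤)
    (hN : ∀ x, ∀ m ∈ N, (ρ x).lTensor U m ∈ N) {u : U} {w₀ : W} (hw₀ : w₀ ≠ 0)
    (huw₀ : u ⊗ₜ w₀ ∈ N) (w : W) : u ⊗ₜ w ∈ N := by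
  let q := N.comap (TensorProduct.mk F U W u)
  have hq : q = ⊤ := by
    refine (hsimple q fun x w hw => ?_).resolve_left fun h => hw₀ ?_
    · show u ⊗ₜ ρ x w ∈ N
      simpa using hN x _ hw
    · rwa [← Submodule.mem_bot F, ← h]
  exact (hq ▸ Submodule.mem_top : w ∈ q)

theorem exists_ne_zero_forall_tmul_mem
    (hsimple : ∀ p : Submodule F W, (∀ x, ∀ w ∈ p, ρ x w ∈ p) → p = ⊥ ∨ p = ⊤)
    (hschur : ∀ g : Module.End F W, (∀ x w, g (ρ x w) = ρ x (g w)) →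
      ∃ c : F, g = c • LinearMap.id)
    (hN : ∀ x, ∀ m ∈ N, (ρ x).lTensor U m ∈ N) (hN0 : N ≠ ⊥) :
    ∃ u ≠ 0, ∀ w, u ⊗ₜ[F] w ∈ N := by
  classical
  let b := Module.Basis.ofVectorSpace F U
  let e := equivFinsuppOfBasisLeft (N := W) b
  have hNe : ∀ x, ∀ f ∈ N.map e.toLinearMap,
      Finsupp.mapRange.linearMap (ρ x) f ∈ N.map e.toLinearMap := by
    rintro x _ ⟨m, hm, rfl⟩
    exact ⟨_, hN x m hm, equivFinsuppOfBasisLeft_lTensor b (ρ x) m⟩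
  obtain ⟨c, hc, w₀, hw₀, hcw₀⟩ :=
    Finsupp.exists_mapRange_smul_mem hsimple hschur hNe (by simpa using hN0)
  refine ⟨b.repr.symm c, b.repr.symm.map_ne_zero_iff.2 hc,
    forall_tmul_mem_of_tmul_mem hsimple hN hw₀ ?_⟩
  rw [Submodule.mem_map_equiv] at hcw₀
  convert hcw₀
  rw [LinearEquiv.eq_symm_apply]
  simp [e]

end Tensor

section Lie

variable {R L U W : Type*} [CommRing R] [LieRing L] [LieAlgebra R L]
  [AddCommGroup U] [Module R U] [LieRingModule L U] [LieModule R L U]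
  [AddCommGroup W] [Module R W] [LieRingModule L W] [LieModule R L W]

theorem lie_eq_lTensor_toEnd_of_forall_lie_eq_zero {x : L} (hx : ∀ u : U, ⁅x, u⁆ = 0)
    (m : U ⊗[R] W) :
    ⁅x, m⁆ = (LieModule.toEnd R L W x).lTensor U m := by
  induction m with
  | zero => simp
  | tmul u w => simp [LieModule.lie_tmul_right, hx u]
  | add m m' hm hm' => rw [lie_add, map_add, hm, hm']

namespace LieSubmodule

def leftSlice (M : LieSubmodule R L (U ⊗[R] W)) : LieSubmodule R L U where
  carrier := {u | ∀ w, u ⊗ₜ w ∈ M}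
  add_mem' hu hu' w := by simpa [add_tmul] using M.add_mem (hu w) (hu' w)
  zero_mem' w := by simp
  smul_mem' c u hu w := by simpa [smul_tmul'] using M.smul_mem c (hu w)
  lie_mem {x u} hu w := by
    simpa [LieModule.lie_tmul_right] using M.sub_mem (M.lie_mem (x := x) (hu w)) (hu ⁅x, w⁆)

theorem eq_top_of_forall_tmul_mem [IsSimpleOrder (LieSubmodule R L U)]
    {M : LieSubmodule R L (U ⊗[R] W)} {u : U} (hu : u ≠ 0) (huM : ∀ w, u ⊗ₜ w ∈ M) : M = ⊤ := by
  have hslice : leftSlice M = ⊤ :=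
    (IsSimpleOrder.eq_bot_or_eq_top _).resolve_left fun h => hu <| by
      rw [← LieSubmodule.mem_bot (R := R) (L := L), ← h]
      exact huM
  rw [eq_top_iff]
  rintro m -
  induction m with
  | zero => exact M.zero_mem
  | tmul u w => exact (hslice ▸ LieSubmodule.mem_top u : u ∈ leftSlice M) w
  | add m m' hm hm' => exact M.add_mem hm hm'

end LieSubmodule

end Lie

theorem tensor_simple_of_simple_of_dense_general
    (F : Type*) [Field F] (L : Type*) [LieRing L] [LieAlgebra F L]
    (I : LieIdeal F L)
    (U : Type*) [AddCommGroup U] [Module F U] [LieRingModule L U] [LieModule F L U]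
    (W : Type*) [AddCommGroup W] [Module F W] [LieRingModule L W] [LieModule F L W]
    -- `U` is a simple `L`-module annihilated by `I`, i.e. a simple `L/I`-module:
    (hUsimple : IsSimpleOrder (LieSubmodule F L U))
    (hUann : ∀ x ∈ I, ∀ u : U, ⁅x, u⁆ = 0)
    -- `W` is simple as an `I`-module:
    (hWnontriv : Nontrivial W)
    (hWsimple : ∀ p : Submodule F W, (∀ x ∈ I, ∀ w ∈ p, ⁅x, w⁆ ∈ p) → p = ⊥ ∨ p = ⊤)
    -- `End_I(W) = F`:
    (hEnd : ∀ f : W →ₗ[F] W, (∀ x ∈ I, ∀ w : W, f ⁅x, w⁆ = ⁅x, f w⁆) →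
      ∃ c : F, f = c • LinearMap.id) :
    IsSimpleOrder (LieSubmodule F L (U ⊗[F] W)) := by
  have : Nontrivial U := (LieSubmodule.nontrivial_iff F L U).1 hUsimple.toNontrivial
  refine ⟨fun M => or_iff_not_imp_left.2 fun hM => ?_⟩
  let ρ : I → Module.End F W := fun x => LieModule.toEnd F L W x
  obtain ⟨u, hu, huM⟩ := exists_ne_zero_forall_tmul_mem (ρ := ρ) (N := M.toSubmodule)
    (fun p hp => hWsimple p fun x hx => hp ⟨x, hx⟩) (fun g hg => hEnd g fun x hx => hg ⟨x, hx⟩)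
    (fun x m hm => lie_eq_lTensor_toEnd_of_forall_lie_eq_zero (hUann x x.2) m ▸ M.lie_mem hm)
    (by simpa using hM)
  exact LieSubmodule.eq_top_of_forall_tmul_mem hu huM

/-- Let `L` be a Lie algebra over a field `F`, `I ⊆ L` an ideal, `U` a simple `L`-module
annihilated by `I` (i.e. a simple `L/I`-module), and `W` an `L`-module which is simple over
`I`, on which `I` acts densely (for every `w` and `g ∈ L` some `k ∈ I` has `⁅k,w⁆ = ⁅g,w⁆`),
and with `End_I(W) = F`.  Then `U ⊗ W` is a simple `L`-module. -/
theorem tensor_simple_of_simple_of_dense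
    (F : Type*) [Field F] (L : Type*) [LieRing L] [LieAlgebra F L]
    (I : LieIdeal F L)
    (U : Type*) [AddCommGroup U] [Module F U] [LieRingModule L U] [LieModule F L U]
    (W : Type*) [AddCommGroup W] [Module F W] [LieRingModule L W] [LieModule F L W]
    -- `U` is a simple `L`-module annihilated by `I`, i.e. a simple `L/I`-module:
    (hUsimple : IsSimpleOrder (LieSubmodule F L U))
    (hUann : ∀ x ∈ I, ∀ u : U, ⁅x, u⁆ = 0)
    -- `W` is simple as an `I`-module:
    (hWnontriv : Nontrivial W)
    (hWsimple : ∀ p : Submodule F W, (∀ x ∈ I, ∀ w ∈ p, ⁅x, w⁆ ∈ p) → p = ⊥ ∨ p = ⊤)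
    -- `I` acts densely on `W`:
    (hdense : ∀ (w : W) (g : L), ∃ k ∈ I, ⁅k, w⁆ = ⁅g, w⁆)
    -- `End_I(W) = F`:
    (hEnd : ∀ f : W →ₗ[F] W, (∀ x ∈ I, ∀ w : W, f ⁅x, w⁆ = ⁅x, f w⁆) →
      ∃ c : F, f = c • LinearMap.id) :
    IsSimpleOrder (LieSubmodule F L (U ⊗[F] W)) :=
  tensor_simple_of_simple_of_dense_general F L I U W hUsimple hUann hWnontriv hWsimple hEnd
end

section
/- Let $\mathfrak{G}$ be a Lie algebra over a field $F$, $I \subseteq \mathfrak{G}$ an ideal, $U$ a $\mathfrak{G}$-module annihilated by $I$, and $W$ a $\mathfrak{G}$-module such that $I$ acts densely on $W$: for every $w \in W$ and $g \in \mathfrak{G}$ there is $k \in I$ with $kw = gw$. If $U$ is simple over $\mathfrak{G}$ and $u \otimes w \in U \otimes W$ is a nonzero simple tensor, then every simple tensor of the form $u' \otimes w$ (for $u' \in U$) lies in the $\mathfrak{G}$-submodule of $U \otimes W$ generated by $u \otimes w$. -/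
open TensorProduct

/-! The `u'` with `u' ⊗ w` in the span of `u ⊗ w` form a Lie submodule of `U`: for `g ∈ L` pick
`k ∈ I` with `k w = g w`, so that `(g - k)(u' ⊗ w) = g u' ⊗ w`. It contains `u ≠ 0`, so it is all
of `U` by simplicity. -/

namespace LieModule

variable {F L U W : Type*} [Field F] [LieRing L] [LieAlgebra F L]
  [AddCommGroup U] [Module F U] [LieRingModule L U] [LieModule F L U]
  [AddCommGroup W] [Module F W] [LieRingModule L W] [LieModule F L W]

theorem sub_lie_tmul_eq_lie_tmul {g k : L} (hk : ∀ u : U, ⁅k, u⁆ = 0) {w : W}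
    (hkw : ⁅k, w⁆ = ⁅g, w⁆) (u : U) :
    ⁅g - k, u ⊗ₜ[F] w⁆ = ⁅g, u⁆ ⊗ₜ[F] w := by
  rw [sub_lie, TensorProduct.LieModule.lie_tmul_right, TensorProduct.LieModule.lie_tmul_right,
    hk, hkw, zero_tmul, zero_add, add_sub_cancel_right]

def tmulPreimage (N : LieSubmodule F L (U ⊗[F] W)) {w : W}
    (hw : ∀ g : L, ∃ k : L, (∀ u : U, ⁅k, u⁆ = 0) ∧ ⁅k, w⁆ = ⁅g, w⁆) :
    LieSubmodule F L U where
  __ := N.toSubmodule.comap ((TensorProduct.mk F U W).flip w)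
  lie_mem {g a} ha := by
    obtain ⟨k, hk, hkw⟩ := hw g
    change ⁅g, a⁆ ⊗ₜ[F] w ∈ N
    rw [← sub_lie_tmul_eq_lie_tmul hk hkw]
    exact N.lie_mem ha

theorem mem_tmulPreimage {N : LieSubmodule F L (U ⊗[F] W)} {w : W}
    {hw : ∀ g : L, ∃ k : L, (∀ u : U, ⁅k, u⁆ = 0) ∧ ⁅k, w⁆ = ⁅g, w⁆} {u : U} :
    u ∈ tmulPreimage N hw ↔ u ⊗ₜ[F] w ∈ N :=
  Iff.rfl

end LieModule

/-- Let `L` be a Lie algebra over a field `F`, `I` an ideal, `U` a simple `L`-module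
annihilated by `I`, and `W` an `L`-module on which `I` acts densely.  If `u ⊗ w` is a
nonzero simple tensor, then every simple tensor `u' ⊗ w` lies in the `L`-submodule of
`U ⊗ W` generated by `u ⊗ w`. -/
theorem simple_tensors_mem_lieSpan
    (F : Type*) [Field F] (L : Type*) [LieRing L] [LieAlgebra F L]
    (I : LieIdeal F L)
    (U : Type*) [AddCommGroup U] [Module F U] [LieRingModule L U] [LieModule F L U]
    (W : Type*) [AddCommGroup W] [Module F W] [LieRingModule L W] [LieModule F L W]
    (hUsimple : IsSimpleOrder (LieSubmodule F L U))
    (hUann : ∀ x ∈ I, ∀ u : U, ⁅x, u⁆ = 0)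
    (hdense : ∀ (w : W) (g : L), ∃ k ∈ I, ⁅k, w⁆ = ⁅g, w⁆)
    (u : U) (w : W) (h0 : u ⊗ₜ[F] w ≠ 0) :
    ∀ u' : U, u' ⊗ₜ[F] w ∈ LieSubmodule.lieSpan F L {u ⊗ₜ[F] w} := by
  have hw : ∀ g : L, ∃ k : L, (∀ u : U, ⁅k, u⁆ = 0) ∧ ⁅k, w⁆ = ⁅g, w⁆ := fun g ↦
    (hdense w g).imp fun k ⟨hkI, hkw⟩ ↦ ⟨hUann k hkI, hkw⟩
  set S := LieModule.tmulPreimage (LieSubmodule.lieSpan F L {u ⊗ₜ[F] w}) hw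
  have hu : u ∈ S := LieModule.mem_tmulPreimage.2 (LieSubmodule.subset_lieSpan rfl)
  have hu0 : u ≠ 0 := by
    rintro rfl
    exact h0 (zero_tmul _ _)
  have hS : S = ⊤ := (hUsimple.eq_bot_or_eq_top S).resolve_left fun h ↦
    hu0 ((LieSubmodule.mem_bot u).1 (h ▸ hu))
  intro u'
  exact LieModule.mem_tmulPreimage.1 (hS ▸ LieSubmodule.mem_top u')
end

section
/- Let $V$ be a vector space over a field $F$ with basis indexed by $\mathbb{N}$, identify $V^*$ with the space of all sequences $F^{\mathbb{N}}$ and $V_*$ with the subspace of finitely supported sequences. The Lie algebra $\mathfrak{g}^M$ of $\mathbb{N} \times \mathbb{N}$ matrices with finitely many nonzero entries in each row and each column acts on $V^*$, preserving $V_*$, hence acts on $V^*/V_*$. Then this action on $V^*/V_*$ is transitive on nonzero elements: for any two nonzero $x, y \in V^*/V_*$ there exists $a \in \mathfrak{g}^M$ with $a \cdot x = y$. -/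
/-!
Since `x` has infinitely many nonzero entries, choose distinct indices `n 0, n 1, …` with
`x (n j) ≠ 0`. The matrix whose column `j` has the single entry `y j / x (n j)` in row `n j`
has at most one nonzero entry in each row and column, and `x` times it is exactly `y`.
-/

open Function

section SingleEntryColumns

variable {ι κ F : Type*}

def singleEntryColumns [Zero F] [DecidableEq ι] (n : κ → ι) (c : κ → F) : ι → κ → F :=
  fun i j => if i = n j then c j else 0

variable [DecidableEq ι]

theorem singleEntryColumns_row_support_finite [Zero F] {n : κ → ι} (hn : Injective n)
    (c : κ → F) (i : ι) : (support (singleEntryColumns n c i)).Finite := by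
  refine ((Set.finite_singleton i).preimage hn.injOn).subset fun j hj => ?_
  by_contra hji
  exact hj (if_neg fun h => hji h.symm)

theorem singleEntryColumns_col_support_finite [Zero F] (n : κ → ι) (c : κ → F) (j : κ) :
    (support fun i => singleEntryColumns n c i j).Finite :=
  (Set.finite_singleton (n j)).subset fun _ hi => by_contra fun hij => hi (if_neg hij)

theorem finsum_mul_singleEntryColumns [NonUnitalNonAssocSemiring F] (x : ι → F) (n : κ → ι)
    (c : κ → F) (j : κ) : ∑ᶠ i, x i * singleEntryColumns n c i j = x (n j) * c j := by
  rw [finsum_eq_single _ (n j) fun i hi => by simp [singleEntryColumns, hi]]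
  simp [singleEntryColumns]

end SingleEntryColumns

theorem exists_rowColFinite_vecMul_eq {F : Type*} [Field F] {x : ℕ → F}
    (hx : (support x).Infinite) (y : ℕ → F) :
    ∃ a : ℕ → ℕ → F,
      (∀ i, (support (a i)).Finite) ∧
      (∀ j, (support fun i => a i j).Finite) ∧
      ∀ j, ∑ᶠ i, x i * a i j = y j := by
  let e := Set.Infinite.natEmbedding _ hx
  let n : ℕ → ℕ := Subtype.val ∘ e
  have hn : Injective n := Subtype.val_injective.comp e.injective
  have hxn : ∀ j, x (n j) ≠ 0 := fun j => (e j).2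
  refine ⟨singleEntryColumns n fun j => y j / x (n j),
    singleEntryColumns_row_support_finite hn _, singleEntryColumns_col_support_finite n _,
    fun j => ?_⟩
  rw [finsum_mul_singleEntryColumns, mul_div_cancel₀ _ (hxn j)]

theorem matrices_transitive_on_quotient_general (F : Type*) [Field F]
    (x y : ℕ → F)
    (hx : ¬ (Function.support x).Finite) :
    ∃ a : ℕ → ℕ → F,
      (∀ i, (Function.support (a i)).Finite) ∧
      (∀ j, (Function.support fun i => a i j).Finite) ∧
      (Function.support fun j => (∑ᶠ i, x i * a i j) - y j).Finite := by
  obtain ⟨a, hrow, hcol, hxa⟩ := exists_rowColFinite_vecMul_eq hx y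
  refine ⟨a, hrow, hcol, ?_⟩
  simp [hxa]

/-- Row vectors `V* = F^ℕ`, the subspace `V_*` of finitely supported ones, and matrices with
finitely many nonzero entries in every row and every column acting by right multiplication:
the induced action on `V*/V_*` is transitive on nonzero elements.  Concretely: for any
`x, y : ℕ → F` neither of which is finitely supported (i.e. nonzero classes mod `V_*`),
there is a matrix `a` with finite rows and columns such that `x·a - y` is finitely
supported, i.e. `a` maps the class of `x` to the class of `y`. -/
theorem matrices_transitive_on_quotient (F : Type*) [Field F]
    (x y : ℕ → F)
    (hx : ¬ (Function.support x).Finite) (hy : ¬ (Function.support y).Finite) :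
    ∃ a : ℕ → ℕ → F,
      (∀ i, (Function.support (a i)).Finite) ∧
      (∀ j, (Function.support fun i => a i j).Finite) ∧
      (Function.support fun j => (∑ᶠ i, x i * a i j) - y j).Finite :=
  matrices_transitive_on_quotient_general F x y hx
end

section
/- Let $V$ be a countable-dimensional complex vector space with basis $(v_i)_{i\in\mathbb{N}}$, $V_* \subseteq V^*$ the span of the dual basis, and $\mathfrak{g}^M = \mathfrak{gl}^M(V, V_*)$ the Mackey Lie algebra of endomorphisms of $V$ whose duals preserve $V_*$. Then $V^*/V_*$ is a simple $\mathfrak{g}^M$-module. -/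
/-!
A functional lies in `V_*` exactly when it is nonzero on only finitely many basis vectors.
Given `f ∉ V_*` and an arbitrary `g`, pick an injection `σ` into the infinite set
`{i | f (vᵢ) ≠ 0}` and let `φ vⱼ = (g vⱼ / f v_{σ j}) • v_{σ j}`. Then `φ* f = g`, and `φ*`
preserves `V_*` because the support of `φ* w` lies in the `σ`-preimage of the support of `w`.
So every nonzero vector of `V*/V_*` generates the whole module.
-/

namespace Module.Basis

section

variable {ι R M : Type*} [CommSemiring R] [AddCommMonoid M] [Module R M] (B : Basis ι R M)

theorem linearCombination_coord_apply_self (c : ι →₀ R) (j : ι) :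
    Finsupp.linearCombination R B.coord c (B j) = c j := by
  classical
  simp +contextual [Finsupp.linearCombination_apply, Finsupp.single_apply]

theorem mem_span_range_coord_iff (f : Dual R M) :
    f ∈ Submodule.span R (Set.range B.coord) ↔ Function.HasFiniteSupport fun i => f (B i) := by
  rw [← Finsupp.range_linearCombination, LinearMap.mem_range]
  constructor
  · rintro ⟨c, rfl⟩
    simpa only [linearCombination_coord_apply_self] using c.hasFiniteSupport
  · intro hf
    exact ⟨Finsupp.ofSupportFinite _ hf, B.ext fun j => B.linearCombination_coord_apply_self _ j⟩

theorem sumCoords_notMem_span_range_coord [Nontrivial R] [Infinite ι] :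
    B.sumCoords ∉ Submodule.span R (Set.range B.coord) := by
  simp only [mem_span_range_coord_iff, sumCoords_self_apply, Function.HasFiniteSupport,
    Function.support_const one_ne_zero]
  exact Set.infinite_univ

theorem map_transpose_constr_le_span_range_coord {σ : ι → ι} (hσ : σ.Injective) (c : ι → R) :
    (Submodule.span R (Set.range B.coord)).map
        (Dual.transpose (R := R) (B.constr R fun j => c j • B (σ j))) ≤
      Submodule.span R (Set.range B.coord) := by
  rintro _ ⟨w, hw, rfl⟩
  rw [SetLike.mem_coe, mem_span_range_coord_iff] at hw
  rw [mem_span_range_coord_iff]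
  refine (hw.preimage hσ.injOn).subset fun j hj => ?_
  simp only [Function.mem_support, Dual.transpose_apply, LinearMap.comp_apply, constr_basis,
    map_smul, smul_eq_mul] at hj
  exact right_ne_zero_of_mul hj

end

theorem exists_transpose_eq_of_not_hasFiniteSupport {ι K V : Type*} [Countable ι] [Field K]
    [AddCommGroup V] [Module K V] (B : Basis ι K V) {f : Dual K V}
    (hf : ¬Function.HasFiniteSupport fun i => f (B i)) (g : Dual K V) :
    ∃ φ : End K V, (Submodule.span K (Set.range B.coord)).map (Dual.transpose (R := K) φ) ≤
      Submodule.span K (Set.range B.coord) ∧ Dual.transpose (R := K) φ f = g := by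
  obtain ⟨e, he⟩ := Countable.exists_injective_nat ι
  let σ : ι → ι := fun j => Set.Infinite.natEmbedding _ hf (e j)
  have hσ : σ.Injective :=
    (Subtype.val_injective.comp (Set.Infinite.natEmbedding _ hf).injective).comp he
  have hfσ (j : ι) : f (B (σ j)) ≠ 0 := (Set.Infinite.natEmbedding _ hf (e j)).2
  refine ⟨B.constr K fun j => (g (B j) / f (B (σ j))) • B (σ j),
    B.map_transpose_constr_le_span_range_coord hσ _, B.ext fun j => ?_⟩
  simp [Dual.transpose_apply, div_mul_cancel₀ _ (hfσ j)]

end Module.Basis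

/-- Let `V` be a countable-dimensional complex vector space with basis `(vᵢ)`, `V_* ⊆ V*` the
span of the dual basis, and `𝔤^M` the Mackey Lie algebra of endomorphisms `φ` of `V` whose
duals preserve `V_*`.  Then `V*/V_*` is a simple `𝔤^M`-module (for the action induced by the
dual action): it is nonzero, and every subspace invariant under all such `φ` is `⊥` or `⊤`. -/
theorem quotient_dual_simple_over_mackey (V : Type*) [AddCommGroup V] [Module ℂ V]
    (B : Module.Basis ℕ ℂ V)
    (Vs : Submodule ℂ (Module.Dual ℂ V)) (hVs : Vs = Submodule.span ℂ (Set.range B.coord)) :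
    Nontrivial (Module.Dual ℂ V ⧸ Vs) ∧
    ∀ p : Submodule ℂ (Module.Dual ℂ V ⧸ Vs),
      (∀ φ : Module.End ℂ V, Vs.map (Module.Dual.transpose (R := ℂ) φ) ≤ Vs →
        ∀ f : Module.Dual ℂ V, Submodule.Quotient.mk f ∈ p →
          Submodule.Quotient.mk (Module.Dual.transpose (R := ℂ) φ f) ∈ p) →
      p = ⊥ ∨ p = ⊤ := by
  subst hVs
  refine ⟨Submodule.Quotient.nontrivial_iff.2 fun h => B.sumCoords_notMem_span_range_coord
    (h ▸ Submodule.mem_top), fun p hp => or_iff_not_imp_left.2 fun hp_ne_bot => ?_⟩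
  obtain ⟨x, hxp, hx_ne⟩ := Submodule.exists_mem_ne_zero_of_ne_bot hp_ne_bot
  obtain ⟨f, rfl⟩ := Submodule.Quotient.mk_surjective _ x
  have hf : ¬Function.HasFiniteSupport fun i => f (B i) := fun hfin =>
    hx_ne ((Submodule.Quotient.mk_eq_zero _).2 ((B.mem_span_range_coord_iff f).2 hfin))
  refine Submodule.eq_top_iff'.2 fun y => ?_
  obtain ⟨g, rfl⟩ := Submodule.Quotient.mk_surjective _ y
  obtain ⟨φ, hφ, rfl⟩ := B.exists_transpose_eq_of_not_hasFiniteSupport hf g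
  exact hp φ hφ f hxp
end

section
/- Let $x \in (V^*/V_*)^{\otimes k}$ be a nonzero element, where $V^*/V_*$ is the quotient of all sequences in $\mathbb{C}^{\mathbb{N}}$ by finitely supported ones. Suppose $h$ is a diagonal matrix whose diagonal entries take values $t_1, \ldots, t_k$ on a partition $\mathbb{N} = I_1 \sqcup \cdots \sqcup I_k$ into infinite subsets, where the $t_j \in \mathbb{C}$ are chosen so that the sums $\sum_j m_j t_j$ over tuples of non-negative integers with $\sum_j m_j = k$ are pairwise distinct for distinct tuples (e.g., $t_j = (k+1)^j$). Then the generalized eigenspace decomposition of the action of $h$ on $(V^*/V_*)^{\otimes k}$ separates tensors according to the multiset of blocks in which their tensorands are concentrated: the eigenvalue of $h$ on a simple tensor $x_1 \otimes \cdots \otimes x_k$ with $x_i$ concentrated in $I_{j_i}$ is $\sum_i t_{j_i}$. -/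
open TensorProduct

variable (F : Type*) [Field F]

/-- The subspace of finitely supported sequences (`V_*` inside `V* = F^ℕ`). -/
def finSupp : Submodule F (ℕ → F) where
  carrier := {x | (Function.support x).Finite}
  add_mem' := fun hx hy => Set.Finite.subset (hx.union hy) (Function.support_add _ _)
  zero_mem' := by simp [Function.support_zero]
  smul_mem' := fun c x hx =>
    Set.Finite.subset hx (Function.support_const_smul_subset c x)

variable {F}

/-- The Leibniz-rule action of an endomorphism `A` on the `s`-th tensor power. -/
noncomputable def leibniz {s : ℕ} {Q : Type*} [AddCommGroup Q] [Module F Q]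
    (A : Q →ₗ[F] Q) :
    (⨂[F] _ : Fin s, Q) →ₗ[F] ⨂[F] _ : Fin s, Q :=
  ∑ i : Fin s, PiTensorProduct.map (Function.update (fun _ => LinearMap.id) i A)

/-- The diagonal matrix whose entry at `n` is `t (J n)`, acting on row vectors `ℕ → ℂ`. -/
def diagMul {k : ℕ} (J : ℕ → Fin k) (t : Fin k → ℂ) : (ℕ → ℂ) →ₗ[ℂ] (ℕ → ℂ) where
  toFun x := fun n => t (J n) * x n
  map_add' x y := by funext n; simp [mul_add]
  map_smul' c x := by
    funext n
    simp only [Pi.smul_apply, smul_eq_mul, RingHom.id_apply]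
    ring

theorem diagMul_le_comap {k : ℕ} (J : ℕ → Fin k) (t : Fin k → ℂ) :
    finSupp ℂ ≤ (finSupp ℂ).comap (diagMul J t) := by
  intro x hx
  refine Set.Finite.subset hx fun n hn => ?_
  simp only [Function.mem_support] at hn ⊢
  exact fun h => hn (by simp [diagMul, h])

theorem leibniz_tprod_of_forall_eq_smul {Q : Type*} [AddCommGroup Q] [Module F Q] {s : ℕ}
    {A : Q →ₗ[F] Q} {v : Fin s → Q} {c : Fin s → F} (hv : ∀ i, A (v i) = c i • v i) :
    leibniz A (PiTensorProduct.tprod F v) = (∑ i, c i) • PiTensorProduct.tprod F v := by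
  classical
  rw [leibniz, LinearMap.sum_apply, Finset.sum_smul]
  refine Finset.sum_congr rfl fun i _ => ?_
  have hupdate : (fun l => Function.update (fun _ => LinearMap.id) i A l (v l))
      = Function.update v i (c i • v i) := by
    funext l
    rcases eq_or_ne l i with rfl | hl
    · simpa using hv l
    · simp [Function.update_of_ne hl]
  rw [PiTensorProduct.map_tprod, hupdate, MultilinearMap.map_update_smul, Function.update_eq_self]

theorem diagMul_sub_smul_mem_finSupp {k : ℕ} {J : ℕ → Fin k} (t : Fin k → ℂ) {x : ℕ → ℂ}
    {j : Fin k} (hx : {n | x n ≠ 0 ∧ J n ≠ j}.Finite) :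
    diagMul J t x - t j • x ∈ finSupp ℂ := by
  refine hx.subset fun n hn => ?_
  simp only [Function.mem_support, Set.mem_ofPred_eq] at hn ⊢
  refine ⟨fun h0 => hn ?_, fun hJ => hn ?_⟩
  · simp [diagMul, h0]
  · simp [diagMul, hJ]

theorem mapQ_diagMul_mkQ {k : ℕ} {J : ℕ → Fin k} (t : Fin k → ℂ) {x : ℕ → ℂ} {j : Fin k}
    (hx : {n | x n ≠ 0 ∧ J n ≠ j}.Finite) :
    Submodule.mapQ (finSupp ℂ) (finSupp ℂ) (diagMul J t) (diagMul_le_comap J t)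
      ((finSupp ℂ).mkQ x) = t j • (finSupp ℂ).mkQ x := by
  rw [Submodule.mkQ_apply, Submodule.mapQ_apply, ← Submodule.Quotient.mk_smul,
    Submodule.Quotient.eq]
  exact diagMul_sub_smul_mem_finSupp t hx

theorem diag_eigenvalue_on_concentrated_tensor_general
    (k : ℕ) (J : ℕ → Fin k)
    (t : Fin k → ℂ)
    (x : Fin k → (ℕ → ℂ)) (jx : Fin k → Fin k)
    (hconc : ∀ i, {n | x i n ≠ 0 ∧ J n ≠ jx i}.Finite) :
    leibniz (Submodule.mapQ (finSupp ℂ) (finSupp ℂ) (diagMul J t) (diagMul_le_comap J t))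
        (PiTensorProduct.tprod ℂ fun i : Fin k => (finSupp ℂ).mkQ (x i))
      = (∑ i, t (jx i)) • PiTensorProduct.tprod ℂ fun i : Fin k => (finSupp ℂ).mkQ (x i) :=
  leibniz_tprod_of_forall_eq_smul fun i => mapQ_diagMul_mkQ t (hconc i)

/-- Let `h` be the diagonal matrix with entry `t j` on the (infinite) block `I_j = J⁻¹(j)` of
a partition of `ℕ` into `k` blocks, where the sums `∑ m_j t_j` (over tuples of non-negative
integers summing to `k`) are pairwise distinct.  Acting by the Leibniz rule on
`(V*/V_*)^{⊗k}`, `h` has the simple tensor `x₁ ⊗ ⋯ ⊗ x_k`, with `x_i` concentrated in the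
block `I_{j_i}`, as an eigenvector with eigenvalue `∑ᵢ t_{j_i}`. -/
theorem diag_eigenvalue_on_concentrated_tensor
    (k : ℕ) (hk : 1 ≤ k) (J : ℕ → Fin k) (hJ : ∀ j, {n | J n = j}.Infinite)
    (t : Fin k → ℂ)
    (ht : ∀ m m' : Fin k → ℕ, (∑ j, m j) = k → (∑ j, m' j) = k →
      (∑ j, (m j : ℂ) * t j) = (∑ j, (m' j : ℂ) * t j) → m = m')
    (x : Fin k → (ℕ → ℂ)) (jx : Fin k → Fin k)
    (hconc : ∀ i, {n | x i n ≠ 0 ∧ J n ≠ jx i}.Finite) :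
    leibniz (Submodule.mapQ (finSupp ℂ) (finSupp ℂ) (diagMul J t) (diagMul_le_comap J t))
        (PiTensorProduct.tprod ℂ fun i : Fin k => (finSupp ℂ).mkQ (x i))
      = (∑ i, t (jx i)) • PiTensorProduct.tprod ℂ fun i : Fin k => (finSupp ℂ).mkQ (x i) :=
  diag_eigenvalue_on_concentrated_tensor_general k J t x jx hconc
end
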